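/- If ε > 0, then for every s ∈ S, every 1 ≤ n ≤ N, and every a ∈ A(s) with a ≠ a*_n(s), one has Q_n(s, a*_n(s)) > Q_n(s, a); in other words, under the cost-of-control incentives with strictly positive ε, the designated action a*_n(s) is the unique maximizer of the incentivized Q-function Q_n(s,·) over A(s), so the agent is guaranteed to take the incentivized actions at every stage. -/
import Mathlib


section

variable {S A : Type} [Fintype S] [Fintype A] [DecidableEq S] [DecidableEq A]

/-- Uncontrolled value function, indexed by the number `m` of remaining stages:
`Vbar R P avail hne m s = V̄_{N+1-m}(s)`; in particular `Vbar ... 0 = V̄_{N+1} = 0`. -/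
noncomputable def Vbar (R : S → A → ℝ) (P : S → A → S → ℝ) (avail : S → Finset A)
    (hne : ∀ s, (avail s).Nonempty) : ℕ → S → ℝ
  | 0 => fun _ => 0
  | m + 1 => fun s =>
      (avail s).sup' (hne s) fun a => R s a + ∑ s' : S, P s a s' * Vbar R P avail hne m s'

/-- Uncontrolled Q-function at stage `n` (for a horizon `N`):
`Qbar ... N n s a = Q̄_n(s,a) = R(s,a) + Σ_{s'} P(s,a,s')·V̄_{n+1}(s')`. -/
noncomputable def Qbar (R : S → A → ℝ) (P : S → A → S → ℝ) (avail : S → Finset A)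
    (hne : ∀ s, (avail s).Nonempty) (N n : ℕ) (s : S) (a : A) : ℝ :=
  R s a + ∑ s' : S, P s a s' * Vbar R P avail hne (N - n) s'

/-- The cost-of-control incentives: at stage `n`, the designated action `astar n s` receives
`V̄_n(s) − Q̄_n(s,a) + ε` and every other action receives `0`. -/
noncomputable def gammaInc (R : S → A → ℝ) (P : S → A → S → ℝ) (avail : S → Finset A)
    (hne : ∀ s, (avail s).Nonempty) (N : ℕ) (astar : ℕ → S → A) (ε : ℝ)
    (n : ℕ) (s : S) (a : A) : ℝ :=
  if a = astar n s then
    Vbar R P avail hne (N + 1 - n) s - Qbar R P avail hne N n s a + ε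
  else 0

/-- Incentivized value function, indexed by the number `m` of remaining stages:
`Vinc ... m s = V_{N+1-m}(s)`; the stage of the decision taken with `m+1` stages remaining
is `n = N - m`. -/
noncomputable def Vinc (R : S → A → ℝ) (P : S → A → S → ℝ) (avail : S → Finset A)
    (hne : ∀ s, (avail s).Nonempty) (N : ℕ) (astar : ℕ → S → A) (ε : ℝ) :
    ℕ → S → ℝ
  | 0 => fun _ => 0
  | m + 1 => fun s =>
      (avail s).sup' (hne s) fun a =>
        R s a + gammaInc R P avail hne N astar ε (N - m) s a +
          ∑ s' : S, P s a s' * Vinc R P avail hne N astar ε m s'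

/-- Incentivized Q-function at stage `n`:
`Qinc ... n s a = Q_n(s,a) = R(s,a) + γ_n(s,a) + Σ_{s'} P(s,a,s')·V_{n+1}(s')`. -/
noncomputable def Qinc (R : S → A → ℝ) (P : S → A → S → ℝ) (avail : S → Finset A)
    (hne : ∀ s, (avail s).Nonempty) (N : ℕ) (astar : ℕ → S → A) (ε : ℝ)
    (n : ℕ) (s : S) (a : A) : ℝ :=
  R s a + gammaInc R P avail hne N astar ε n s a +
    ∑ s' : S, P s a s' * Vinc R P avail hne N astar ε (N - n) s'

/-- With strictly positive `ε`, the designated action `a*_n(s)` is the unique maximizer of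
the incentivized Q-function `Q_n(s,·)` over `A(s)`: for every stage `1 ≤ n ≤ N`, every state
`s` and every available `a ≠ a*_n(s)`, `Q_n(s, a*_n(s)) > Q_n(s, a)`. -/
theorem incentivized_action_uniquely_optimal
    (R : S → A → ℝ) (P : S → A → S → ℝ) (avail : S → Finset A)
    (hne : ∀ s, (avail s).Nonempty)
    (hP0 : ∀ s a s', 0 ≤ P s a s')
    (hP1 : ∀ s, ∀ a ∈ avail s, (∑ s' : S, P s a s') = 1)
    (N : ℕ) (hN : 1 ≤ N) (ε : ℝ) (hε : 0 < ε)
    (astar : ℕ → S → A)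
    (hastar : ∀ n s, 1 ≤ n → n ≤ N → astar n s ∈ avail s) :
    ∀ n, 1 ≤ n → n ≤ N → ∀ s : S, ∀ a ∈ avail s, a ≠ astar n s →
      Qinc R P avail hne N astar ε n s (astar n s) >
        Qinc R P avail hne N astar ε n s a := by
  -- auxiliary: sum shift
  have hsum : ∀ (s : S) (a : A), a ∈ avail s → ∀ (V : S → ℝ) (c : ℝ),
      (∑ s' : S, P s a s' * (V s' + c)) = (∑ s' : S, P s a s' * V s') + c := by
    intro s a ha V c
    simp only [mul_add, Finset.sum_add_distrib, ← Finset.sum_mul, hP1 s a ha, one_mul]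
  -- key: Vinc m = Vbar m + m ε for m ≤ N
  have key : ∀ m, m ≤ N → ∀ s, Vinc R P avail hne N astar ε m s
      = Vbar R P avail hne m s + m * ε := by
    intro m
    induction m with
    | zero => intro _ s; simp [Vinc, Vbar]
    | succ m ih =>
      intro hm s
      have hmN : m ≤ N := Nat.le_of_succ_le hm
      have h1 : 1 ≤ N - m := by omega
      have h2 : N - m ≤ N := by omega
      have hstar : astar (N - m) s ∈ avail s := hastar _ s h1 h2
      have e1 : N + 1 - (N - m) = m + 1 := by omega
      have e2 : N - (N - m) = m := by omega
      have hf : ∀ a ∈ avail s,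
          (R s a + gammaInc R P avail hne N astar ε (N - m) s a +
            ∑ s' : S, P s a s' * Vinc R P avail hne N astar ε m s')
          = R s a + gammaInc R P avail hne N astar ε (N - m) s a +
            ((∑ s' : S, P s a s' * Vbar R P avail hne m s') + m * ε) := by
        intro a ha
        have : ∀ s' : S, Vinc R P avail hne N astar ε m s'
            = Vbar R P avail hne m s' + m * ε := fun s' => ih hmN s'
        simp only [this]
        rw [hsum s a ha]
      have hfstar : (R s (astar (N - m) s) +
            gammaInc R P avail hne N astar ε (N - m) s (astar (N - m) s) +
            ∑ s' : S, P s (astar (N - m) s) s' * Vinc R P avail hne N astar ε m s')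
          = Vbar R P avail hne (m + 1) s + ε + m * ε := by
        rw [hf _ hstar]
        simp only [gammaInc, eq_self_iff_true, if_true, Qbar, e1, e2]
        ring
      show (avail s).sup' (hne s) _ = _
      apply le_antisymm
      · apply Finset.sup'_le
        intro a ha
        by_cases hcase : a = astar (N - m) s
        · subst hcase
          rw [hfstar]
          push_cast
          linarith
        · rw [hf a ha]
          simp only [gammaInc, if_neg hcase, add_zero]
          have hle : R s a + ∑ s' : S, P s a s' * Vbar R P avail hne m s'
              ≤ Vbar R P avail hne (m + 1) s :=
            Finset.le_sup' (f := fun a =>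
              R s a + ∑ s' : S, P s a s' * Vbar R P avail hne m s') ha
          push_cast
          linarith
      · calc Vbar R P avail hne (m + 1) s + (↑(m + 1)) * ε
            = R s (astar (N - m) s) +
              gammaInc R P avail hne N astar ε (N - m) s (astar (N - m) s) +
              ∑ s' : S, P s (astar (N - m) s) s' *
                Vinc R P avail hne N astar ε m s' := by
              rw [hfstar]; push_cast; ring
          _ ≤ _ := Finset.le_sup' (f := fun a =>
              R s a + gammaInc R P avail hne N astar ε (N - m) s a +
                ∑ s' : S, P s a s' * Vinc R P avail hne N astar ε m s') hstar
  -- main goal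
  intro n hn1 hnN s a ha hane
  have hstar : astar n s ∈ avail s := hastar n s hn1 hnN
  have hmN : N - n ≤ N := Nat.sub_le _ _
  have e1 : N + 1 - n = (N - n) + 1 := by omega
  have hkey : ∀ s' : S, Vinc R P avail hne N astar ε (N - n) s'
      = Vbar R P avail hne (N - n) s' + (↑(N - n) : ℝ) * ε := fun s' => key _ hmN s'
  simp only [Qinc, hkey]
  rw [hsum s a ha, hsum s (astar n s) hstar]
  simp only [gammaInc, eq_self_iff_true, if_true, if_neg hane, Qbar, e1]
  have hle : R s a + ∑ s' : S, P s a s' * Vbar R P avail hne (N - n) s'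
      ≤ Vbar R P avail hne ((N - n) + 1) s :=
    Finset.le_sup' (f := fun a =>
      R s a + ∑ s' : S, P s a s' * Vbar R P avail hne (N - n) s') ha
  have : Vbar R P avail hne ((N - n) + 1) s
      = (avail s).sup' (hne s) fun a =>
        R s a + ∑ s' : S, P s a s' * Vbar R P avail hne (N - n) s' := rfl
  linarith

end
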